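/- Let A be Hermitian with A = A₁A₂ = A₂A₁. Let P₁ = (A₁A₁*)^{1/2} be the left polar factor of A₁ and P₂ = (A₂*A₂)^{1/2} the right polar factor of A₂. Then the positive semi-definite polar factor P = (A²)^{1/2} of A satisfies P = P₁P₂ = P₂P₁. -/

import Mathlib

/-
Since `a` is self-adjoint and `a = a₁ a₂ = a₂ a₁`, one has `a₁* a₂* = (a₂ a₁)* = a`, hence
`p₁² p₂² = a₁ (a₁* a₂*) a₂ = a₁ a₂ a₁ a₂ = a²`. Taking adjoints gives `p₂² p₁² = a²` as well, so
`p₁²` and `p₂²` commute; as `p₁`, `p₂` are continuous functions of their squares, `p₁` and `p₂`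
commute. A product of commuting positive elements is positive, and `(p₁ p₂)² = p₁² p₂² = a² = p²`,
so `p = p₁ p₂` by uniqueness of positive square roots.
-/

open Matrix
open scoped ComplexOrder

/-- The spectral norm (operator 2-norm) of a complex matrix. -/
noncomputable def specNorm {m n : Type*} [Fintype m] [Fintype n] [DecidableEq n]
    (A : Matrix m n ℂ) : ℝ :=
  ‖LinearMap.toContinuousLinearMap (Matrix.toEuclideanLin A)‖

/-- `B` is the Moore–Penrose pseudoinverse of `A` (the four Penrose conditions). -/
def IsMP {m n : Type*} [Fintype m] [Fintype n]
    (A : Matrix m n ℂ) (B : Matrix n m ℂ) : Prop :=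
  A * B * A = A ∧ B * A * B = B ∧ (A * B)ᴴ = A * B ∧ (B * A)ᴴ = B * A

lemma IsSelfAdjoint.mul_star_mul_star_mul_eq_mul_self {R : Type*} [Semigroup R] [StarMul R]
    {a a₁ a₂ : R} (ha : IsSelfAdjoint a) (hfac : a = a₁ * a₂) (hcomm : Commute a₁ a₂) :
    a₁ * star a₁ * (star a₂ * a₂) = a * a := by
  have hstar : star a₁ * star a₂ = a := by
    rw [← star_mul, ← hcomm.eq, ← hfac, ha.star_eq]
  calc a₁ * star a₁ * (star a₂ * a₂) = a₁ * (star a₁ * star a₂) * a₂ := by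
        simp only [mul_assoc]
    _ = a₁ * (a₂ * a₁) * a₂ := by rw [hstar, hfac, hcomm.eq]
    _ = a * a := by rw [hfac]; simp only [mul_assoc]

section CStarAlgebra

variable {A : Type*} [NonUnitalCStarAlgebra A] [PartialOrder A] [StarOrderedRing A]

lemma Commute.of_mul_self_left {a b : A} (ha : 0 ≤ a) (h : Commute (a * a) b) : Commute a b :=
  CFC.sqrt_mul_self a ▸ h.cfcₙ_nnreal NNReal.sqrt

lemma Commute.of_mul_self_mul_self {a b : A} (ha : 0 ≤ a) (hb : 0 ≤ b)
    (h : Commute (a * a) (b * b)) : Commute a b :=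
  (h.symm.of_mul_self_left hb).symm.of_mul_self_left ha

theorem IsSelfAdjoint.eq_mul_and_commute_of_mul_self_eq {a a₁ a₂ p p₁ p₂ : A}
    (ha : IsSelfAdjoint a) (hfac : a = a₁ * a₂) (hcomm : Commute a₁ a₂)
    (hp₁ : 0 ≤ p₁) (hp₁sq : p₁ * p₁ = a₁ * star a₁)
    (hp₂ : 0 ≤ p₂) (hp₂sq : p₂ * p₂ = star a₂ * a₂)
    (hp : 0 ≤ p) (hpsq : p * p = a * a) :
    p = p₁ * p₂ ∧ Commute p₁ p₂ := by
  have hsq : p₁ * p₁ * (p₂ * p₂) = a * a := by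
    rw [hp₁sq, hp₂sq, ha.mul_star_mul_star_mul_eq_mul_self hfac hcomm]
  have hsq_comm : Commute (p₁ * p₁) (p₂ * p₂) :=
    (IsSelfAdjoint.commute_iff (hp₁sq ▸ .mul_star_self a₁) (hp₂sq ▸ .star_mul_self a₂)).mpr
      (hsq ▸ (ha.commute_iff ha).mp (.refl a))
  have hp₁p₂ := hsq_comm.of_mul_self_mul_self hp₁ hp₂
  refine ⟨(CFC.mul_self_eq_mul_self_iff p (p₁ * p₂) hp (hp₁p₂.mul_nonneg hp₁ hp₂)).mp ?_, hp₁p₂⟩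
  rw [hpsq, ← hsq, hp₁p₂.symm.mul_mul_mul_comm]

end CStarAlgebra

-- With the L2 operator norm, complex matrices form a C⋆-algebra ordered by `PosSemidef`.
open scoped Matrix.Norms.L2Operator MatrixOrder in
theorem stmt7 (n : ℕ) (A A₁ A₂ P P₁ P₂ : Matrix (Fin n) (Fin n) ℂ)
    (hA : A.IsHermitian) (hfac : A = A₁ * A₂) (hfac' : A₁ * A₂ = A₂ * A₁)
    (hP₁ : P₁.PosSemidef) (hP₁sq : P₁ * P₁ = A₁ * A₁ᴴ)
    (hP₂ : P₂.PosSemidef) (hP₂sq : P₂ * P₂ = A₂ᴴ * A₂)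
    (hP : P.PosSemidef) (hPsq : P * P = A * A) :
    P = P₁ * P₂ ∧ P₁ * P₂ = P₂ * P₁ :=
  IsSelfAdjoint.eq_mul_and_commute_of_mul_self_eq hA hfac hfac'
    hP₁.nonneg hP₁sq hP₂.nonneg hP₂sq hP.nonneg hPsq
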